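/- Let u, d, u', d', y be natural numbers with u + d = u' + d', and let q be a real number with q > 0 and q ≠ 1. Then PP_q(u,d,y) · q^{u·d·y} · Δ_q([u']) · Δ_q([d']) · Δ_q([y+u]) · Δ_q([y+d]) = PP_q(u',d',y) · q^{u'·d'·y} · Δ_q([u]) · Δ_q([d]) · Δ_q([y+u']) · Δ_q([y+d']). (Equivalently, PP_q(u,d,y)/PP_q(u',d',y) = q^{−udy+u'd'y} · [Δ_q([u])Δ_q([d])/(Δ_q([u'])Δ_q([d']))] · [Δ_q([y+u'])Δ_q([y+d'])/(Δ_q([y+u])Δ_q([y+d]))]; this identity is used in the proof of the q-Shuffling Theorem to rewrite the g-function.) -/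
import Mathlib


open Finset

/-- The `q`-Vandermonde product `Δ_q(T) = ∏_{i<j in T} (q^{t_j} - q^{t_i})`, as a real number. -/
noncomputable def vdmq (q : ℝ) (T : Finset ℕ) : ℝ :=
  ∏ p ∈ (T ×ˢ T).filter (fun p => p.1 < p.2), (q ^ p.2 - q ^ p.1)

/-- `PP_q(a,b,c) = ∏∏∏ (1-q^{i+j+k-1})/(1-q^{i+j+k-2})`. -/
noncomputable def PPq (q : ℝ) (a b c : ℕ) : ℝ :=
  ∏ i ∈ Finset.Icc 1 a, ∏ j ∈ Finset.Icc 1 b, ∏ k ∈ Finset.Icc 1 c,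
    ((1 - q ^ (i + j + k - 1)) / (1 - q ^ (i + j + k - 2)))

namespace PPqAux

/-- `E q m = ∏_{k=1}^m (1 - q^k)`. -/
noncomputable def E (q : ℝ) (m : ℕ) : ℝ := ∏ k ∈ Icc 1 m, (1 - q ^ k)

/-- `T m = 1 + 2 + ... + m`. -/
def T (m : ℕ) : ℕ := ∑ k ∈ Icc 1 m, k

/-- `V q m = ∏_{i=1}^m (q^{m+1} - q^i)`. -/
noncomputable def V (q : ℝ) (m : ℕ) : ℝ := ∏ i ∈ Icc 1 m, (q ^ (m + 1) - q ^ i)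

/-- `Φ(u,d) = PP_q(u,d,y) q^{udy} Δ([y+u]) Δ([y+d])`. -/
noncomputable def Phi (q : ℝ) (y u d : ℕ) : ℝ :=
  PPq q u d y * q ^ (u * d * y) * vdmq q (Icc 1 (y + u)) * vdmq q (Icc 1 (y + d))

/-- `Ψ(u,d) = Δ([u]) Δ([d])`. -/
noncomputable def Psi (q : ℝ) (u d : ℕ) : ℝ := vdmq q (Icc 1 u) * vdmq q (Icc 1 d)

variable {q : ℝ}

lemma Icc1_succ (m : ℕ) : Icc 1 (m + 1) = insert (m + 1) (Icc 1 m) := by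
  ext b; simp [mem_Icc]; omega

lemma one_sub_pow_ne (hq : 0 < q) (hq1 : q ≠ 1) {k : ℕ} (hk : k ≠ 0) : (1 : ℝ) - q ^ k ≠ 0 := by
  rcases lt_trichotomy q 1 with h | h | h
  · have : q ^ k < 1 := pow_lt_one₀ hq.le h hk
    intro hc; linarith
  · exact absurd h hq1
  · have : 1 < q ^ k := one_lt_pow₀ h hk
    intro hc; linarith

lemma pow_sub_ne (hq : 0 < q) (hq1 : q ≠ 1) {a b : ℕ} (hab : a < b) : q ^ b - q ^ a ≠ 0 := by
  have h1 : q ^ b - q ^ a = -(q ^ a * (1 - q ^ (b - a))) := by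
    rw [mul_sub, mul_one, ← pow_add]
    have : a + (b - a) = b := by omega
    rw [this]; ring
  rw [h1, neg_ne_zero]
  exact mul_ne_zero (pow_ne_zero a (ne_of_gt hq)) (one_sub_pow_ne hq hq1 (by omega))

lemma E_ne (hq : 0 < q) (hq1 : q ≠ 1) (m : ℕ) : E q m ≠ 0 := by
  rw [E]
  refine prod_ne_zero_iff.2 fun k hk => one_sub_pow_ne hq hq1 ?_
  simp [mem_Icc] at hk; omega

lemma E_shift (c m : ℕ) : E q (c + m) = E q c * ∏ j ∈ Icc 1 m, (1 - q ^ (c + j)) := by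
  induction m with
  | zero => simp [E]
  | succ n ih =>
    rw [← Nat.add_assoc, E, Icc1_succ, prod_insert (by simp), ← E, ih,
      Icc1_succ, prod_insert (by simp)]
    ring

lemma T_add (a b : ℕ) : T (a + b) = T a + T b + a * b := by
  induction b with
  | zero => simp [T]
  | succ n ih =>
    have h1 : T (a + (n + 1)) = T (a + n) + (a + n + 1) := by
      rw [T, ← Nat.add_assoc, Icc1_succ, sum_insert (by simp), T]; omega
    have h2 : T (n + 1) = T n + (n + 1) := by
      rw [T, Icc1_succ, sum_insert (by simp), T]; omega
    have h3 : a * (n + 1) = a * n + a := by ring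
    omega

lemma V_eq (hq : 0 < q) (m : ℕ) : V q m = (-1) ^ m * q ^ T m * E q m := by
  have h1 : ∀ i ∈ Icc 1 m, q ^ (m + 1) - q ^ i = -1 * (q ^ i * (1 - q ^ (m + 1 - i))) := by
    intro i hi
    simp [mem_Icc] at hi
    rw [mul_sub, mul_one, ← pow_add]
    have : i + (m + 1 - i) = m + 1 := by omega
    rw [this]; ring
  rw [V, prod_congr rfl h1, prod_mul_distrib, prod_mul_distrib, prod_const,
    Nat.card_Icc, prod_pow_eq_pow_sum]
  have h2 : ∏ i ∈ Icc 1 m, (1 - q ^ (m + 1 - i)) = E q m := by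
    rw [E]
    apply prod_nbij' (fun a => m + 1 - a) (fun b => m + 1 - b)
    · intro a ha; simp [mem_Icc] at *; omega
    · intro a ha; simp [mem_Icc] at *; omega
    · intro a ha; simp [mem_Icc] at *; omega
    · intro a ha; simp [mem_Icc] at *; omega
    · intro a ha; rfl
  rw [h2, T, show m + 1 - 1 = m from by omega]
  ring

lemma vdmq_eq (q : ℝ) (S : Finset ℕ) :
    vdmq q S = ∏ a ∈ S, ∏ b ∈ S.filter (fun b => a < b), (q ^ b - q ^ a) := by
  rw [vdmq, prod_filter, prod_product]
  simp [prod_filter]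

lemma vdm_succ (m : ℕ) :
    vdmq q (Icc 1 (m + 1)) = vdmq q (Icc 1 m) * V q m := by
  rw [vdmq_eq, vdmq_eq, V, Icc1_succ, prod_insert (by simp)]
  have h1 : (insert (m + 1) (Icc 1 m)).filter (fun b => m + 1 < b) = ∅ := by
    ext b; simp [mem_Icc]; omega
  rw [h1, prod_empty, one_mul]
  rw [mul_comm, ← prod_mul_distrib]
  apply prod_congr rfl
  intro a ha
  simp [mem_Icc] at ha
  have h2 : (insert (m + 1) (Icc 1 m)).filter (fun b => a < b)
      = insert (m + 1) ((Icc 1 m).filter (fun b => a < b)) := by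
    ext b; simp [mem_Icc]; omega
  rw [h2, prod_insert (by simp [mem_Icc])]

lemma telescope (hq : 0 < q) (hq1 : q ≠ 1) (s : ℕ) (hs : 1 ≤ s) (c : ℕ) :
    ∏ k ∈ Icc 1 c, ((1 - q ^ (s + k)) / (1 - q ^ (s + k - 1)))
      = (1 - q ^ (s + c)) / (1 - q ^ s) := by
  induction c with
  | zero => simp [div_self (one_sub_pow_ne hq hq1 (by omega : s ≠ 0))]
  | succ n ih =>
    rw [Icc1_succ, prod_insert (by simp), ih]
    have h1 : (1 : ℝ) - q ^ (s + n) ≠ 0 := one_sub_pow_ne hq hq1 (by omega)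
    have h2 : (1 : ℝ) - q ^ s ≠ 0 := one_sub_pow_ne hq hq1 (by omega)
    have h3 : s + (n + 1) - 1 = s + n := by omega
    rw [h3]
    field_simp

lemma PP_succ_left (hq : 0 < q) (hq1 : q ≠ 1) (u d y : ℕ) :
    PPq q (u + 1) d y
      = PPq q u d y * ∏ j ∈ Icc 1 d, ((1 - q ^ (y + u + j)) / (1 - q ^ (u + j))) := by
  rw [PPq, Icc1_succ, prod_insert (by simp [mem_Icc]), ← PPq, mul_comm]
  congr 1
  apply prod_congr rfl
  intro j hj
  simp [mem_Icc] at hj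
  have h1 : ∀ k ∈ Icc 1 y, (1 - q ^ (u + 1 + j + k - 1)) / (1 - q ^ (u + 1 + j + k - 2))
      = (1 - q ^ (u + j + k)) / (1 - q ^ (u + j + k - 1)) := by
    intro k hk
    simp [mem_Icc] at hk
    congr 3 <;> omega
  rw [prod_congr rfl h1, telescope hq hq1 (u + j) (by omega) y,
    show u + j + y = y + u + j by omega]

lemma PP_succ_right (hq : 0 < q) (hq1 : q ≠ 1) (u d y : ℕ) :
    PPq q u (d + 1) y
      = PPq q u d y * ∏ i ∈ Icc 1 u, ((1 - q ^ (y + d + i)) / (1 - q ^ (d + i))) := by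
  rw [PPq, PPq, ← prod_mul_distrib]
  apply prod_congr rfl
  intro i hi
  simp [mem_Icc] at hi
  rw [Icc1_succ, prod_insert (by simp [mem_Icc]), mul_comm]
  congr 1
  have h1 : ∀ k ∈ Icc 1 y, (1 - q ^ (i + (d + 1) + k - 1)) / (1 - q ^ (i + (d + 1) + k - 2))
      = (1 - q ^ (d + i + k)) / (1 - q ^ (d + i + k - 1)) := by
    intro k hk
    simp [mem_Icc] at hk
    congr 3 <;> omega
  rw [prod_congr rfl h1, telescope hq hq1 (d + i) (by omega) y,
    show d + i + y = y + d + i by omega]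

lemma keycore (hq : 0 < q) (hq1 : q ≠ 1) (u d y : ℕ) :
    (∏ j ∈ Icc 1 d, (1 - q ^ (y + u + j))) * q ^ ((u + 1) * d * y) * V q (y + u) * V q d
        * (∏ i ∈ Icc 1 u, (1 - q ^ (d + i)))
      = (∏ i ∈ Icc 1 u, (1 - q ^ (y + d + i))) * q ^ (u * (d + 1) * y) * V q (y + d) * V q u
        * (∏ j ∈ Icc 1 d, (1 - q ^ (u + j))) := by
  have hN1 : E q (y + u) * (∏ j ∈ Icc 1 d, (1 - q ^ (y + u + j))) = E q (y + u + d) :=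
    (E_shift (y + u) d).symm
  have hN2 : E q (y + d) * (∏ i ∈ Icc 1 u, (1 - q ^ (y + d + i))) = E q (y + d + u) :=
    (E_shift (y + d) u).symm
  have hD1 : E q u * (∏ j ∈ Icc 1 d, (1 - q ^ (u + j))) = E q (u + d) :=
    (E_shift u d).symm
  have hD2 : E q d * (∏ i ∈ Icc 1 u, (1 - q ^ (d + i))) = E q (d + u) :=
    (E_shift d u).symm
  rw [V_eq hq, V_eq hq, V_eq hq, V_eq hq]
  have hq' : q ^ ((u + 1) * d * y + T (y + u) + T d) = q ^ (u * (d + 1) * y + T (y + d) + T u) := by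
    congr 1
    rw [T_add y u, T_add y d]
    ring
  have hE : E q (y + u + d) * E q (d + u) = E q (y + d + u) * E q (u + d) := by
    rw [show y + u + d = y + d + u by omega, show d + u = u + d by omega]
  calc (∏ j ∈ Icc 1 d, (1 - q ^ (y + u + j))) * q ^ ((u + 1) * d * y)
        * ((-1) ^ (y + u) * q ^ T (y + u) * E q (y + u)) * ((-1) ^ d * q ^ T d * E q d)
        * (∏ i ∈ Icc 1 u, (1 - q ^ (d + i)))
      = (-1) ^ (y + u + d) * q ^ ((u + 1) * d * y + T (y + u) + T d)
          * ((E q (y + u) * ∏ j ∈ Icc 1 d, (1 - q ^ (y + u + j)))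
            * (E q d * ∏ i ∈ Icc 1 u, (1 - q ^ (d + i)))) := by
        rw [pow_add (-1 : ℝ) (y + u) d, pow_add q, pow_add q]; ring
    _ = (-1) ^ (y + u + d) * q ^ ((u + 1) * d * y + T (y + u) + T d)
          * (E q (y + u + d) * E q (d + u)) := by rw [hN1, hD2]
    _ = (-1) ^ (y + d + u) * q ^ (u * (d + 1) * y + T (y + d) + T u)
          * (E q (y + d + u) * E q (u + d)) := by
        rw [hq', hE, show y + u + d = y + d + u by omega]
    _ = _ := by
        rw [← hN2, ← hD1, pow_add (-1 : ℝ) (y + d) u, pow_add q, pow_add q]; ring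

lemma vdm_ne (hq : 0 < q) (hq1 : q ≠ 1) (S : Finset ℕ) : vdmq q S ≠ 0 := by
  rw [vdmq]
  refine prod_ne_zero_iff.2 fun p hp => ?_
  simp [mem_filter] at hp
  exact pow_sub_ne hq hq1 hp.2

lemma Psi_ne (hq : 0 < q) (hq1 : q ≠ 1) (u d : ℕ) : Psi q u d ≠ 0 :=
  mul_ne_zero (vdm_ne hq hq1 _) (vdm_ne hq hq1 _)

lemma step (hq : 0 < q) (hq1 : q ≠ 1) (y u d : ℕ) :
    Phi q y (u + 1) d * Psi q u (d + 1) = Phi q y u (d + 1) * Psi q (u + 1) d := by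
  have hD1 : (∏ j ∈ Icc 1 d, ((1 : ℝ) - q ^ (u + j))) ≠ 0 := by
    refine prod_ne_zero_iff.2 fun j hj => one_sub_pow_ne hq hq1 ?_
    simp [mem_Icc] at hj; omega
  have hD2 : (∏ i ∈ Icc 1 u, ((1 : ℝ) - q ^ (d + i))) ≠ 0 := by
    refine prod_ne_zero_iff.2 fun i hi => one_sub_pow_ne hq hq1 ?_
    simp [mem_Icc] at hi; omega
  have key := keycore hq hq1 u d y
  have keycore' :
      (∏ j ∈ Icc 1 d, ((1 - q ^ (y + u + j)) / (1 - q ^ (u + j)))) * q ^ ((u + 1) * d * y)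
          * V q (y + u) * V q d
        = (∏ i ∈ Icc 1 u, ((1 - q ^ (y + d + i)) / (1 - q ^ (d + i)))) * q ^ (u * (d + 1) * y)
          * V q (y + d) * V q u := by
    rw [prod_div_distrib, prod_div_distrib]
    field_simp
    linear_combination key
  simp only [Phi, Psi]
  rw [PP_succ_left hq hq1, PP_succ_right hq hq1,
    show y + (u + 1) = (y + u) + 1 from rfl, show y + (d + 1) = (y + d) + 1 from rfl,
    vdm_succ, vdm_succ, vdm_succ, vdm_succ]
  linear_combination (PPq q u d y * vdmq q (Icc 1 (y + u)) * vdmq q (Icc 1 (y + d))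
    * vdmq q (Icc 1 u) * vdmq q (Icc 1 d)) * keycore'

lemma toZero (hq : 0 < q) (hq1 : q ≠ 1) (y : ℕ) :
    ∀ d u : ℕ, Phi q y u d * Psi q (u + d) 0 = Phi q y (u + d) 0 * Psi q u d := by
  intro d
  induction d with
  | zero => intro u; simp [mul_comm]
  | succ n ih =>
    intro u
    have hstep := step hq hq1 y u n
    have hih := ih (u + 1)
    have hne := Psi_ne hq hq1 (u + 1) n
    apply mul_left_cancel₀ hne
    have h1 : u + (n + 1) = u + 1 + n := by omega
    rw [h1]
    linear_combination - Psi q (u + 1 + n) 0 * hstep + Psi q u (n + 1) * hih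

end PPqAux

open PPqAux in
/-- The `PP_q`-ratio identity used to rewrite the `g`-function in the proof of the
q-Shuffling Theorem. -/
theorem PPq_ratio (u d u' d' y : ℕ) (h : u + d = u' + d')
    (q : ℝ) (hq : 0 < q) (hq1 : q ≠ 1) :
    PPq q u d y * q ^ (u * d * y) * vdmq q (Finset.Icc 1 u') * vdmq q (Finset.Icc 1 d') *
        vdmq q (Finset.Icc 1 (y + u)) * vdmq q (Finset.Icc 1 (y + d))
      = PPq q u' d' y * q ^ (u' * d' * y) * vdmq q (Finset.Icc 1 u) * vdmq q (Finset.Icc 1 d) *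
        vdmq q (Finset.Icc 1 (y + u')) * vdmq q (Finset.Icc 1 (y + d')) := by
  have h1 := toZero hq hq1 y d u
  have h2 := toZero hq hq1 y d' u'
  rw [h] at h1
  have hne := Psi_ne hq hq1 (u' + d') 0
  have hmain : Phi q y u d * Psi q u' d' = Phi q y u' d' * Psi q u d := by
    apply mul_left_cancel₀ hne
    linear_combination Psi q u' d' * h1 - Psi q u d * h2
  simp only [Phi, Psi] at hmain
  linear_combination hmain
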